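/- arXiv:2504.20260 — 3 statements merged into one kernel-verified Lean document; each statement's English description precedes it below -/
import Mathlib

section
/- Soundness of the bilinear-map puzzle: suppose in addition that the element e(g₁, g₂) has order p in G_T, where p is prime. Let m, k, m̂ be integers such that m·k is not divisible by p and m̂ is not congruent to m modulo p. Then e(g₁^m̂, g₂^k) ≠ e(g₁, g₂^(m·k)); that is, the puzzle (g₂^k, g₂^(m·k)) for solution m does not match any m̂ ≢ m (mod p). -/
/-- Soundness of the bilinear-map puzzle: if `e g₁ g₂` has prime order `p` in `G_T`,
`p` does not divide `m * k`, and `mhat ≢ m (mod p)`, then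
`e (g₁^mhat) (g₂^k) ≠ e g₁ (g₂^(m*k))`. -/
theorem bilinear_puzzle_soundness
    {G₁ G₂ G_T : Type*} [CommGroup G₁] [CommGroup G₂] [CommGroup G_T]
    (g₁ : G₁) (g₂ : G₂) (e : G₁ → G₂ → G_T)
    (hbilin : ∀ a b : ℤ, e (g₁ ^ a) (g₂ ^ b) = (e g₁ g₂) ^ (a * b))
    (p : ℕ) (hp : p.Prime) (horder : orderOf (e g₁ g₂) = p)
    (m k mhat : ℤ) (hmk : ¬ (p : ℤ) ∣ m * k) (hmhat : ¬ mhat ≡ m [ZMOD p]) :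
    e (g₁ ^ mhat) (g₂ ^ k) ≠ e g₁ (g₂ ^ (m * k)) := by
  intro h
  have h1 : e g₁ (g₂ ^ (m * k)) = (e g₁ g₂) ^ (1 * (m * k)) := by
    have := hbilin 1 (m * k); simpa using this
  rw [hbilin, h1, one_mul] at h
  have hone : (e g₁ g₂) ^ (mhat * k - m * k) = 1 := by
    rw [zpow_sub, h, mul_inv_cancel]
  have hdvd : (p : ℤ) ∣ (mhat * k - m * k) := by
    have := orderOf_dvd_iff_zpow_eq_one.mpr hone
    rwa [horder] at this
  have hk : ¬ (p : ℤ) ∣ k := fun hk => hmk (hk.mul_left m)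
  have heq : mhat * k - m * k = (mhat - m) * k := by ring
  rw [heq] at hdvd
  have hdm := (Int.Prime.dvd_mul' (by exact_mod_cast hp) hdvd).resolve_right hk
  exact hmhat (Int.ModEq.symm (Int.modEq_iff_dvd.mpr hdm))
end

section
/- Rerandomization of the bilinear-map puzzle does not change the solution: assume additionally that e(a, b^n) = e(a, b)^n for all a ∈ G₁, b ∈ G₂ and all integers n, and that every element t of G_T satisfies t^p = 1, where p is prime. Then for any z₁, z₂ ∈ G₂, any integer m, and any integer r' not divisible by p, one has e(g₁^m, z₁) = e(g₁, z₂) if and only if e(g₁^m, z₁^(r')) = e(g₁, z₂^(r')). That is, the rerandomized puzzle (z₁^(r'), z₂^(r')) matches exactly the same solutions m as the original puzzle (z₁, z₂). -/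
/-- Rerandomization of the bilinear-map puzzle does not change the solution:
assuming `e a (b^n) = (e a b)^n` for all `a, b, n`, and that every element of
`G_T` satisfies `t^p = 1` with `p` prime, then for any `z₁ z₂ : G₂`, integer `m`,
and integer `r'` not divisible by `p`,
`e (g₁^m) z₁ = e g₁ z₂ ↔ e (g₁^m) (z₁^r') = e g₁ (z₂^r')`. -/
theorem bilinear_puzzle_rerandomize_solution
    {G₁ G₂ G_T : Type*} [CommGroup G₁] [CommGroup G₂] [CommGroup G_T]
    (g₁ : G₁) (g₂ : G₂) (e : G₁ → G₂ → G_T)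
    (hexp : ∀ (a : G₁) (b : G₂) (n : ℤ), e a (b ^ n) = (e a b) ^ n)
    (p : ℕ) (hp : p.Prime) (hGT : ∀ t : G_T, t ^ p = 1)
    (z₁ z₂ : G₂) (m r' : ℤ) (hr' : ¬ (p : ℤ) ∣ r') :
    e (g₁ ^ m) z₁ = e g₁ z₂ ↔ e (g₁ ^ m) (z₁ ^ r') = e g₁ (z₂ ^ r') := by
  rw [hexp, hexp]
  constructor
  · intro h; rw [h]
  · intro h
    set x := e (g₁ ^ m) z₁ with hx
    set y := e g₁ z₂ with hy
    have hcop : IsCoprime r' (p : ℤ) := by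
      rw [Int.isCoprime_iff_gcd_eq_one]
      have hdvd : Int.gcd r' (p : ℤ) ∣ p := by
        have := Int.gcd_dvd_right (a := r') (b := (p : ℤ))
        exact_mod_cast this
      rcases hp.eq_one_or_self_of_dvd _ hdvd with h1 | hd
      · exact h1
      · exact absurd (hd ▸ Int.gcd_dvd_left (a := r') (b := (p : ℤ))) hr'
    obtain ⟨s, t, hst⟩ := hcop
    have hxp : x ^ (p : ℤ) = 1 := by rw [zpow_natCast]; exact hGT x
    have hyp : y ^ (p : ℤ) = 1 := by rw [zpow_natCast]; exact hGT y
    calc x = x ^ (s * r' + t * p) := by rw [hst, zpow_one]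
      _ = (x ^ r') ^ s * (x ^ (p : ℤ)) ^ t := by
          rw [zpow_add, mul_comm s r', mul_comm t (p : ℤ), zpow_mul, zpow_mul]
      _ = (y ^ r') ^ s * (y ^ (p : ℤ)) ^ t := by rw [h, hxp, hyp]
      _ = y ^ (s * r' + t * p) := by
          rw [zpow_add, mul_comm s r', mul_comm t (p : ℤ), zpow_mul, zpow_mul]
      _ = y := by rw [hst, zpow_one]
end

section
/- Rerandomization of the universal-re-encryption puzzle does not change the solution: let [(α₀, β₀); (α₁, β₁)] be elements of G satisfying α₁ = β₁^x and α₀ = m·β₀^x (i.e., the puzzle matches m). Then for all integers r₀', r₁', the rerandomized puzzle [(α₀·α₁^(r₀'), β₀·β₁^(r₀')); (α₁^(r₁'), β₁^(r₁'))] satisfies α₁^(r₁') = (β₁^(r₁'))^x and α₀·α₁^(r₀') = m·(β₀·β₁^(r₀'))^x, so it matches m; moreover, for any m̂ ∈ G, the rerandomized puzzle matches m̂ if and only if m̂ = m. -/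
/-- Rerandomization of the universal-re-encryption puzzle does not change the
solution: if `α₁ = β₁^x` and `α₀ = m·β₀^x`, then for all integers `r₀', r₁'`,
the rerandomized puzzle `[(α₀·α₁^r₀', β₀·β₁^r₀'); (α₁^r₁', β₁^r₁')]` matches `m`,
and it matches `mhat` iff `mhat = m`. -/
theorem ure_puzzle_rerandomize_solution
    {G : Type*} [CommGroup G] (g : G) (x : ℤ) (y : G) (hy : y = g ^ x)
    (α₀ β₀ α₁ β₁ m : G) (h₁ : α₁ = β₁ ^ x) (h₀ : α₀ = m * β₀ ^ x) :
    ∀ r₀' r₁' : ℤ,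
      α₁ ^ r₁' = (β₁ ^ r₁') ^ x ∧
      α₀ * α₁ ^ r₀' = m * (β₀ * β₁ ^ r₀') ^ x ∧
      (∀ mhat : G,
        (α₁ ^ r₁' = (β₁ ^ r₁') ^ x ∧ α₀ * α₁ ^ r₀' = mhat * (β₀ * β₁ ^ r₀') ^ x) ↔
          mhat = m) := by
  intro r₀' r₁'
  subst h₁ h₀
  have key : ∀ r : ℤ, (m * β₀ ^ x) * (β₁ ^ x) ^ r = m * (β₀ * β₁ ^ r) ^ x := by
    intro r
    rw [mul_zpow, ← zpow_mul, ← zpow_mul, mul_comm r x, mul_assoc]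
  refine ⟨by rw [← zpow_mul, ← zpow_mul, mul_comm], key r₀', fun mhat => ?_⟩
  constructor
  · rintro ⟨-, h⟩
    rw [key r₀'] at h; rw [mul_comm m, mul_comm mhat] at h
    exact (mul_left_cancel h).symm
  · rintro rfl
    exact ⟨by rw [← zpow_mul, ← zpow_mul, mul_comm], key r₀'⟩
end
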